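/- Let K be a number field that is Galois over ℚ with cyclic Galois group generated by σ, with ring of integers 𝓞. Suppose β ∈ K has N_{K/ℚ}(β) = 1 and α ∈ 𝓞 is a visible point for β. Then for any nonzero γ ∈ 𝓞, one has γ/σ(γ) = β if and only if there exists a nonzero rational integer n such that γ = n·α. -/

import Mathlib

/-!
If `γ / σ γ = α / σ α`, then `γ / α` is fixed by `σ`, hence by the whole Galois group, so
`γ = q α` with `q = a / b ∈ ℚ` in lowest terms. From `b γ = a α` and `gcd(a, b) = 1` we get
`α = b δ` with `δ ∈ 𝓞`; then `δ / σ δ = β` and `|N(α)| = b ^ [K : ℚ] |N(δ)|`, so the minimality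
of `|N(α)|` forces `b = 1`.
-/

open NumberField

/-- A nonzero algebraic integer `α` is a *visible point* for `β` (of norm `1`) if
`α / σ α = β` and `|N(α)|` is minimal among nonzero algebraic integers mapping to `β`. -/
def IsVisiblePoint (K : Type*) [Field K] [NumberField K]
    (σ : K ≃ₐ[ℚ] K) (β : K) (α : 𝓞 K) : Prop :=
  α ≠ 0 ∧ (α : K) / σ (α : K) = β ∧
    ∀ γ : 𝓞 K, γ ≠ 0 → (γ : K) / σ (γ : K) = β →
      (Algebra.norm ℤ α).natAbs ≤ (Algebra.norm ℤ γ).natAbs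

section DivApply

variable {F K : Type*} [Field F] [Field K] [Algebra F K] (σ : K ≃ₐ[F] K)

theorem mul_div_apply_mul_of_apply_eq_self {c : K} (hc : σ c = c) (hc0 : c ≠ 0) (x : K) :
    c * x / σ (c * x) = x / σ x := by
  rw [map_mul, hc, mul_div_mul_left _ _ hc0]

theorem apply_div_eq_self_of_div_apply_eq {x y : K} (hy : y ≠ 0)
    (h : x / σ x = y / σ y) : σ (x / y) = x / y := by
  have hσy : σ y ≠ 0 := (map_ne_zero σ).mpr hy
  rcases eq_or_ne x 0 with rfl | hx
  · simp
  have hσx : σ x ≠ 0 := (map_ne_zero σ).mpr hx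
  rw [div_eq_div_iff hσx hσy] at h
  rw [map_div₀, div_eq_div_iff hσy hy]
  linear_combination -h

variable {σ} in
theorem mem_range_algebraMap_of_apply_eq_self [FiniteDimensional F K] [IsGalois F K]
    (hσ : ∀ τ : K ≃ₐ[F] K, τ ∈ Subgroup.zpowers σ) {x : K} (hx : σ x = x) :
    x ∈ Set.range (algebraMap F K) :=
  (IsGalois.mem_range_algebraMap_iff_fixed x).mpr fun τ =>
    Subgroup.zpowers_le.mpr (show σ ∈ MulAction.stabilizer _ x from hx) (hσ τ)

end DivApply

theorem NumberField.norm_natCast_mul {K : Type*} [Field K] [NumberField K] (b : ℕ) (x : 𝓞 K) :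
    Algebra.norm ℤ ((b : 𝓞 K) * x) = (b : ℤ) ^ Module.finrank ℤ (𝓞 K) * Algebra.norm ℤ x := by
  rw [map_mul, ← map_natCast (algebraMap ℤ (𝓞 K)), Algebra.norm_algebraMap]

namespace IsVisiblePoint

variable {K : Type*} [Field K] [NumberField K] {σ : K ≃ₐ[ℚ] K} {β : K} {α : 𝓞 K}

theorem coe_ne_zero (hα : IsVisiblePoint K σ β α) : (α : K) ≠ 0 := by
  simpa using hα.1

theorem target_ne_zero (hα : IsVisiblePoint K σ β α) : β ≠ 0 := by
  rw [← hα.2.1]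
  exact div_ne_zero hα.coe_ne_zero ((map_ne_zero σ).mpr hα.coe_ne_zero)

theorem eq_one_of_eq_natCast_mul (hα : IsVisiblePoint K σ β α) {b : ℕ} {δ : 𝓞 K}
    (h : α = b * δ) : b = 1 := by
  obtain ⟨hα0, hαβ, hmin⟩ := hα
  have hδ0 : δ ≠ 0 := by rintro rfl; exact hα0 (by simpa using h)
  have hb0 : b ≠ 0 := by rintro rfl; exact hα0 (by simpa using h)
  have hδβ : (δ : K) / σ δ = β := by
    rw [← hαβ, show (α : K) = b * δ by simp [h],
      mul_div_apply_mul_of_apply_eq_self σ (map_natCast σ b) (Nat.cast_ne_zero.mpr hb0)]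
  have hle := hmin δ hδ0 hδβ
  rw [h, NumberField.norm_natCast_mul, Int.natAbs_mul, Int.natAbs_pow, Int.natAbs_natCast] at hle
  have hpow : b ^ Module.finrank ℤ (𝓞 K) ≤ 1 :=
    Nat.le_of_mul_le_mul_right (by simpa using hle)
      (Int.natAbs_pos.mpr (Algebra.norm_ne_zero_iff.mpr hδ0))
  have hb : b ≤ b ^ Module.finrank ℤ (𝓞 K) := Nat.le_self_pow Module.finrank_pos.ne' b
  omega

theorem den_eq_one (hα : IsVisiblePoint K σ β α) {q : ℚ} {γ : 𝓞 K} (h : (γ : K) = q * α) :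
    q.den = 1 := by
  have hγα : (q.den : 𝓞 K) * γ = q.num * α := by
    have hK : (q.den : K) * γ = q.num * α := by
      rw [h, ← mul_assoc, ← Rat.cast_natCast, ← Rat.cast_mul, mul_comm (q.den : ℚ),
        Rat.mul_den_eq_num, Rat.cast_intCast]
    exact RingOfIntegers.coe_injective (by simpa using hK)
  obtain ⟨δ, hδ⟩ : (q.den : 𝓞 K) ∣ α := by
    have hcop := (Rat.isCoprime_num_den q).intCast (R := 𝓞 K)
    rw [Int.cast_natCast] at hcop
    exact hcop.symm.dvd_of_dvd_mul_left ⟨γ, hγα.symm⟩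
  exact hα.eq_one_of_eq_natCast_mul hδ

end IsVisiblePoint

theorem pi_eq_iff_int_multiple_of_visible_general
    (K : Type*) [Field K] [NumberField K] [IsGalois ℚ K]
    (σ : K ≃ₐ[ℚ] K) (hσ : ∀ τ : K ≃ₐ[ℚ] K, τ ∈ Subgroup.zpowers σ)
    (β : K)
    (α : 𝓞 K) (hα : IsVisiblePoint K σ β α)
    (γ : 𝓞 K) :
    (γ : K) / σ (γ : K) = β ↔ ∃ n : ℤ, n ≠ 0 ∧ γ = n • α := by
  constructor
  · intro h
    obtain ⟨q, hqx⟩ := mem_range_algebraMap_of_apply_eq_self hσ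
      (apply_div_eq_self_of_div_apply_eq σ hα.coe_ne_zero (h.trans hα.2.1.symm))
    have hγ : (γ : K) = q * α := by
      rw [← eq_ratCast (algebraMap ℚ K), hqx, div_mul_cancel₀ _ hα.coe_ne_zero]
    have hq : (q.num : ℚ) = q := Rat.coe_int_num_of_den_eq_one (hα.den_eq_one hγ)
    have hγ' : γ = q.num • α := by
      have hK : (γ : K) = q.num * α := by rw [hγ, ← Rat.cast_intCast, hq]
      exact RingOfIntegers.coe_injective (by simpa using hK)
    refine ⟨q.num, fun h0 => hα.target_ne_zero ?_, hγ'⟩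
    rw [← h, hγ', h0]
    simp
  · rintro ⟨n, hn, rfl⟩
    rw [← hα.2.1]
    simpa using mul_div_apply_mul_of_apply_eq_self σ (map_intCast σ n) (Int.cast_ne_zero.mpr hn) α

/-- If `α` is a visible point for `β` then a nonzero algebraic integer `γ`
satisfies `γ / σ γ = β` iff `γ = n • α` for some nonzero rational integer `n`. -/
theorem pi_eq_iff_int_multiple_of_visible
    (K : Type*) [Field K] [NumberField K] [IsGalois ℚ K]
    (σ : K ≃ₐ[ℚ] K) (hσ : ∀ τ : K ≃ₐ[ℚ] K, τ ∈ Subgroup.zpowers σ)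
    (β : K) (hβ : Algebra.norm ℚ β = 1)
    (α : 𝓞 K) (hα : IsVisiblePoint K σ β α)
    (γ : 𝓞 K) (hγ : γ ≠ 0) :
    (γ : K) / σ (γ : K) = β ↔ ∃ n : ℤ, n ≠ 0 ∧ γ = n • α :=
  pi_eq_iff_int_multiple_of_visible_general K σ hσ β α hα γ
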